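/- arXiv:2412.17888 — 3 statements merged into one kernel-verified Lean document; each statement's English description precedes it below -/
import Mathlib

section
/- Let U : X × X → X × X be the bounded linear operator U(x,b) = (Wx + Vb, ηb), where W and V are bounded self-adjoint operators on X simultaneously diagonalized in an orthonormal basis (v_p) with real eigenvalues (β_p) and (γ_p) respectively, and η ∈ ℝ. Then the operator norm of U equals the square root of sup_p (1/2)(β_p² + γ_p² + η² + sqrt((β_p² + γ_p² + η²)² − 4β_p²η²)). -/
open scoped BigOperators
open scoped RealInnerProductSpace
set_option linter.unusedSectionVars false
set_option linter.deprecated false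
set_option maxHeartbeats 1000000

namespace OpNormTri


noncomputable def sFun (β γ η : ℝ) : ℝ :=
  (1 / 2 : ℝ) * (β ^ 2 + γ ^ 2 + η ^ 2 +
    Real.sqrt ((β ^ 2 + γ ^ 2 + η ^ 2) ^ 2 - 4 * β ^ 2 * η ^ 2))

lemma disc_nonneg (β γ η : ℝ) : 0 ≤ (β ^ 2 + γ ^ 2 + η ^ 2) ^ 2 - 4 * β ^ 2 * η ^ 2 := by
  nlinarith [sq_nonneg (β^2 - η^2), sq_nonneg γ, sq_nonneg β, sq_nonneg η, sq_nonneg (γ^2)]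

lemma key_facts (β γ η : ℝ) :
    β ^ 2 ≤ sFun β γ η ∧ γ ^ 2 + η ^ 2 ≤ sFun β γ η ∧
    (sFun β γ η - β ^ 2) * (sFun β γ η - γ ^ 2 - η ^ 2) = β ^ 2 * γ ^ 2 := by
  set t := β ^ 2 + γ ^ 2 + η ^ 2 with ht
  set r := Real.sqrt (t ^ 2 - 4 * β ^ 2 * η ^ 2) with hrdef
  have hr2 : r ^ 2 = t ^ 2 - 4 * β ^ 2 * η ^ 2 := Real.sq_sqrt (disc_nonneg β γ η)
  have hrnn : 0 ≤ r := Real.sqrt_nonneg _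
  have habs : |β ^ 2 - γ ^ 2 - η ^ 2| ≤ r := by
    rw [← Real.sqrt_sq_eq_abs]
    apply Real.sqrt_le_sqrt
    nlinarith [sq_nonneg (β * γ)]
  have h1 : β ^ 2 - γ ^ 2 - η ^ 2 ≤ r := le_trans (le_abs_self _) habs
  have h2 : -(β ^ 2 - γ ^ 2 - η ^ 2) ≤ r := le_trans (neg_le_abs _) habs
  have hs : sFun β γ η = (1 / 2) * (t + r) := rfl
  refine ⟨by rw [hs]; linarith, by rw [hs]; linarith, ?_⟩
  rw [hs]; nlinarith [hr2]

lemma sFun_nonneg (β γ η : ℝ) : 0 ≤ sFun β γ η :=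
  le_trans (sq_nonneg β) (key_facts β γ η).1

lemma key_ineq (β γ η a c : ℝ) :
    (β * a + γ * c) ^ 2 + η ^ 2 * c ^ 2 ≤ sFun β γ η * (a ^ 2 + c ^ 2) := by
  obtain ⟨hA, hC, hAC⟩ := key_facts β γ η
  set s := sFun β γ η
  set u := Real.sqrt (s - β ^ 2) with hu
  set w := Real.sqrt (s - γ ^ 2 - η ^ 2) with hw
  have hu2 : u ^ 2 = s - β ^ 2 := Real.sq_sqrt (by linarith)
  have hw2 : w ^ 2 = s - γ ^ 2 - η ^ 2 := Real.sq_sqrt (by linarith)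
  have huw : u * w = |β * γ| := by
    rw [hu, hw, ← Real.sqrt_mul (by linarith), hAC]
    rw [show β ^ 2 * γ ^ 2 = (β * γ) ^ 2 by ring, Real.sqrt_sq_eq_abs]
  have habs1 : β * γ * (a * c) ≤ |β * γ| * |a * c| := by
    calc β * γ * (a * c) ≤ |β * γ * (a * c)| := le_abs_self _
    _ = |β * γ| * |a * c| := abs_mul _ _
  have habs2 : 2 * (u * w) * |a * c| ≤ u ^ 2 * a ^ 2 + w ^ 2 * c ^ 2 := by
    calc 2 * (u * w) * |a * c| = 2 * (u * |a|) * (w * |c|) := by rw [abs_mul]; ring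
    _ ≤ (u * |a|) ^ 2 + (w * |c|) ^ 2 := two_mul_le_add_sq _ _
    _ = u ^ 2 * a ^ 2 + w ^ 2 * c ^ 2 := by rw [mul_pow, mul_pow, sq_abs, sq_abs]
  have habs1' : β * γ * (a * c) ≤ u * w * |a * c| := by rw [huw]; exact habs1
  have e1 : u ^ 2 * a ^ 2 + w ^ 2 * c ^ 2 = (s - β ^ 2) * a ^ 2 + (s - γ ^ 2 - η ^ 2) * c ^ 2 := by
    rw [hu2, hw2]
  linarith [habs1', habs2, e1, sq_nonneg (β * a + γ * c)]

lemma key_exists (β γ η : ℝ) :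
    ∃ a c : ℝ, a ^ 2 + c ^ 2 = 1 ∧ (β * a + γ * c) ^ 2 + η ^ 2 * c ^ 2 = sFun β γ η := by
  obtain ⟨hA, hC, hAC⟩ := key_facts β γ η
  set s := sFun β γ η with hsdef
  have hquad : s ^ 2 - (β ^ 2 + γ ^ 2 + η ^ 2) * s + β ^ 2 * η ^ 2 = 0 := by
    linear_combination hAC
  by_cases hz : s = β ^ 2
  · exact ⟨1, 0, by norm_num, by rw [hz]; ring⟩
  · set a₀ := β * γ with ha₀
    set c₀ := s - β ^ 2 with hc₀
    have hc₀ne : c₀ ≠ 0 := sub_ne_zero.mpr (Ne.symm (Ne.symm hz))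
    have hpos : 0 < a₀ ^ 2 + c₀ ^ 2 := by positivity
    set n := Real.sqrt (a₀ ^ 2 + c₀ ^ 2) with hn
    have hnpos : 0 < n := Real.sqrt_pos.mpr hpos
    have hn2 : n ^ 2 = a₀ ^ 2 + c₀ ^ 2 := Real.sq_sqrt hpos.le
    have hval : (β * a₀ + γ * c₀) ^ 2 + η ^ 2 * c₀ ^ 2 = s * (a₀ ^ 2 + c₀ ^ 2) := by
      linear_combination (β ^ 2 - s) * hquad
    refine ⟨a₀ / n, c₀ / n, ?_, ?_⟩
    · rw [div_pow, div_pow, ← add_div, hn2, div_self hpos.ne']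
    · have hstep : (β * (a₀ / n) + γ * (c₀ / n)) ^ 2 + η ^ 2 * (c₀ / n) ^ 2
          = ((β * a₀ + γ * c₀) ^ 2 + η ^ 2 * c₀ ^ 2) / n ^ 2 := by
        field_simp
      rw [hstep, hval, hn2, mul_div_assoc, div_self hpos.ne', mul_one]


lemma sFun_le (β γ η : ℝ) : sFun β γ η ≤ β ^ 2 + γ ^ 2 + η ^ 2 := by
  have h : Real.sqrt ((β ^ 2 + γ ^ 2 + η ^ 2) ^ 2 - 4 * β ^ 2 * η ^ 2)
      ≤ Real.sqrt ((β ^ 2 + γ ^ 2 + η ^ 2) ^ 2) :=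
    Real.sqrt_le_sqrt (by nlinarith [sq_nonneg (β * η)])
  have h2 : Real.sqrt ((β ^ 2 + γ ^ 2 + η ^ 2) ^ 2) = β ^ 2 + γ ^ 2 + η ^ 2 :=
    Real.sqrt_sq (by positivity)
  unfold sFun; linarith

variable {X : Type*} [NormedAddCommGroup X] [InnerProductSpace ℝ X] [CompleteSpace X]

lemma repr_eigen (v : HilbertBasis ℕ ℝ X) (W : X →L[ℝ] X) (β : ℕ → ℝ)
    (hW : ∀ p, W (v p) = β p • v p) (x : X) (p : ℕ) :
    v.repr (W x) p = β p * v.repr x p := by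
  have horth : ∀ i j : ℕ, ⟪v i, v j⟫ = if i = j then (1:ℝ) else 0 :=
    orthonormal_iff_ite.mp v.orthonormal
  have h1 := (v.hasSum_repr x).mapL W
  have h1' : HasSum (fun q => (v.repr x q * β q) • v q) (W x) := by
    convert h1 using 2 with q
    rw [map_smul, hW, smul_smul]
  have h2 := h1'.mapL (innerSL ℝ (v p))
  have h3 : HasSum (fun q => if q = p then β p * v.repr x p else 0) ⟪v p, W x⟫ := by
    convert h2 using 2 with q
    · rfl
    rw [innerSL_apply_apply, real_inner_smul_right, horth]
    rcases eq_or_ne q p with hq | hq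
    · subst hq; simp [mul_comm]
    · simp [hq, Ne.symm hq]
    rfl
  have h4 := (hasSum_ite_eq p (β p * v.repr x p)).unique h3
  rw [v.repr_apply_apply, ← h4]

lemma hasSum_normSq (v : HilbertBasis ℕ ℝ X) (y : X) :
    HasSum (fun p => (v.repr y p) ^ 2) (‖y‖ ^ 2) := by
  have h := v.hasSum_inner_mul_inner y y
  rw [real_inner_self_eq_norm_sq] at h
  convert h using 2 with p
  · rfl
  rw [v.repr_apply_apply, sq, real_inner_comm]


end OpNormTri


/-- Operator norm of `U(x,b) = (Wx + Vb, ηb)` on the Hilbert product space,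
when `W` and `V` are simultaneously diagonalized in an orthonormal basis. -/
theorem opNorm_triangular_operator
    {X : Type*} [NormedAddCommGroup X] [InnerProductSpace ℝ X] [CompleteSpace X]
    (v : HilbertBasis ℕ ℝ X)
    (W V : X →L[ℝ] X) (β γ : ℕ → ℝ) (η : ℝ)
    (hW : ∀ p, W (v p) = β p • v p) (hV : ∀ p, V (v p) = γ p • v p)
    (U : WithLp 2 (X × X) →L[ℝ] WithLp 2 (X × X))
    (hU : ∀ z : WithLp 2 (X × X),
      WithLp.equiv 2 (X × X) (U z) =
        (W (WithLp.equiv 2 (X × X) z).1 + V (WithLp.equiv 2 (X × X) z).2,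
         η • (WithLp.equiv 2 (X × X) z).2)) :
    ‖U‖ = Real.sqrt (⨆ p : ℕ, (1 / 2 : ℝ) * (β p ^ 2 + γ p ^ 2 + η ^ 2 +
      Real.sqrt ((β p ^ 2 + γ p ^ 2 + η ^ 2) ^ 2 - 4 * β p ^ 2 * η ^ 2))) := by
  show ‖U‖ = Real.sqrt (⨆ p : ℕ, OpNormTri.sFun (β p) (γ p) η)
  set S := ⨆ p : ℕ, OpNormTri.sFun (β p) (γ p) η with hS
  -- eigenvalues are bounded
  have hnv : ∀ p, ‖v p‖ = 1 := fun p => v.orthonormal.1 p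
  have hβ : ∀ p, β p ^ 2 ≤ ‖W‖ ^ 2 := by
    intro p
    have h1 : ‖W (v p)‖ = |β p| := by rw [hW, norm_smul, hnv, mul_one, Real.norm_eq_abs]
    have h2 : ‖W (v p)‖ ≤ ‖W‖ := by
      simpa [hnv p] using W.le_opNorm (v p)
    calc β p ^ 2 = |β p| ^ 2 := (sq_abs _).symm
    _ ≤ ‖W‖ ^ 2 := by
        apply pow_le_pow_left₀ (abs_nonneg _); rw [← h1]; exact h2
  have hγ : ∀ p, γ p ^ 2 ≤ ‖V‖ ^ 2 := by
    intro p
    have h1 : ‖V (v p)‖ = |γ p| := by rw [hV, norm_smul, hnv, mul_one, Real.norm_eq_abs]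
    have h2 : ‖V (v p)‖ ≤ ‖V‖ := by simpa [hnv p] using V.le_opNorm (v p)
    calc γ p ^ 2 = |γ p| ^ 2 := (sq_abs _).symm
    _ ≤ ‖V‖ ^ 2 := by
        apply pow_le_pow_left₀ (abs_nonneg _); rw [← h1]; exact h2
  have hbdd : BddAbove (Set.range fun p => OpNormTri.sFun (β p) (γ p) η) := by
    refine ⟨‖W‖ ^ 2 + ‖V‖ ^ 2 + η ^ 2, ?_⟩
    rintro _ ⟨p, rfl⟩
    have := OpNormTri.sFun_le (β p) (γ p) η
    have := hβ p; have := hγ p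
    linarith
  have hSnn : 0 ≤ S :=
    le_trans (OpNormTri.sFun_nonneg (β 0) (γ 0) η) (le_ciSup hbdd 0)
  apply le_antisymm
  · -- upper bound
    have hb : ‖U‖ ≤ Real.sqrt S := by
      apply U.opNorm_le_bound (Real.sqrt_nonneg _)
      intro z
      set x := (WithLp.equiv 2 (X × X) z).1 with hx
      set b := (WithLp.equiv 2 (X × X) z).2 with hb
      have hfst : (U z).fst = W x + V b := by
        have := congrArg Prod.fst (hU z)
        simpa [hx, hb] using this
      have hsnd : (U z).snd = η • b := by
        have := congrArg Prod.snd (hU z)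
        simpa [hb] using this
      -- HasSum expressions
      have hsum1 : HasSum (fun p => (β p * v.repr x p + γ p * v.repr b p) ^ 2)
          (‖W x + V b‖ ^ 2) := by
        have h := OpNormTri.hasSum_normSq v (W x + V b)
        convert h using 2 with p
        rw [map_add, lp.coeFn_add, Pi.add_apply,
          OpNormTri.repr_eigen v W β hW, OpNormTri.repr_eigen v V γ hV]
      have hsum2 : HasSum (fun p => η ^ 2 * (v.repr b p) ^ 2) (‖η • b‖ ^ 2) := by
        have h := OpNormTri.hasSum_normSq v (η • b)
        convert h using 2 with p
        rw [map_smul, lp.coeFn_smul, Pi.smul_apply, smul_eq_mul]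
        ring
      have hsumU : HasSum
          (fun p => (β p * v.repr x p + γ p * v.repr b p) ^ 2 + η ^ 2 * (v.repr b p) ^ 2)
          (‖U z‖ ^ 2) := by
        rw [WithLp.prod_norm_sq_eq_of_L2, hfst, hsnd]
        exact hsum1.add hsum2
      have hsumz : HasSum (fun p => (v.repr x p) ^ 2 + (v.repr b p) ^ 2) (‖z‖ ^ 2) := by
        rw [WithLp.prod_norm_sq_eq_of_L2]
        exact (OpNormTri.hasSum_normSq v z.fst).add (OpNormTri.hasSum_normSq v z.snd)
      have hle : ‖U z‖ ^ 2 ≤ S * ‖z‖ ^ 2 := by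
        refine hasSum_le (fun p => ?_) hsumU (hsumz.mul_left S)
        calc (β p * v.repr x p + γ p * v.repr b p) ^ 2 + η ^ 2 * (v.repr b p) ^ 2
            ≤ OpNormTri.sFun (β p) (γ p) η * ((v.repr x p) ^ 2 + (v.repr b p) ^ 2) :=
              OpNormTri.key_ineq _ _ _ _ _
        _ ≤ S * ((v.repr x p) ^ 2 + (v.repr b p) ^ 2) := by
              apply mul_le_mul_of_nonneg_right (le_ciSup hbdd p) (by positivity)
      calc ‖U z‖ = Real.sqrt (‖U z‖ ^ 2) := (Real.sqrt_sq (norm_nonneg _)).symm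
      _ ≤ Real.sqrt (S * ‖z‖ ^ 2) := Real.sqrt_le_sqrt hle
      _ = Real.sqrt S * ‖z‖ := by
          rw [Real.sqrt_mul hSnn, Real.sqrt_sq (norm_nonneg _)]
    exact hb
  · -- lower bound
    have hlow : ∀ p, OpNormTri.sFun (β p) (γ p) η ≤ ‖U‖ ^ 2 := by
      intro p
      obtain ⟨a, c, hac, hval⟩ := OpNormTri.key_exists (β p) (γ p) η
      set z : WithLp 2 (X × X) := (WithLp.equiv 2 (X × X)).symm (a • v p, c • v p) with hz
      have hzfst : z.fst = a • v p := by rw [hz]; rfl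
      have hzsnd : z.snd = c • v p := by rw [hz]; rfl
      have hznorm : ‖z‖ ^ 2 = 1 := by
        rw [WithLp.prod_norm_sq_eq_of_L2, hzfst, hzsnd, norm_smul, norm_smul, hnv,
          mul_one, mul_one, Real.norm_eq_abs, Real.norm_eq_abs, sq_abs, sq_abs, hac]
      have hzeq : (WithLp.equiv 2 (X × X) z).1 = a • v p ∧
          (WithLp.equiv 2 (X × X) z).2 = c • v p := by
        constructor
        · rw [show (WithLp.equiv 2 (X × X) z).1 = z.fst from rfl, hzfst]
        · rw [show (WithLp.equiv 2 (X × X) z).2 = z.snd from rfl, hzsnd]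
      have hUfst : (U z).fst = (β p * a + γ p * c) • v p := by
        have h := congrArg Prod.fst (hU z)
        change (U z).fst = _ at h; rw [hzeq.1, hzeq.2] at h
        rw [h, map_smul, map_smul, hW, hV, smul_smul, smul_smul, ← add_smul,
          mul_comm a, mul_comm c]
      have hUsnd : (U z).snd = (η * c) • v p := by
        have h := congrArg Prod.snd (hU z)
        change (U z).snd = _ at h; rw [hzeq.2] at h
        rw [h, smul_smul]
      have hUnorm : ‖U z‖ ^ 2 = OpNormTri.sFun (β p) (γ p) η := by
        rw [WithLp.prod_norm_sq_eq_of_L2, hUfst, hUsnd, norm_smul, norm_smul, hnv,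
          mul_one, mul_one, Real.norm_eq_abs, Real.norm_eq_abs, sq_abs, sq_abs, ← hval]
        ring
      have hle : ‖U z‖ ≤ ‖U‖ := by
        have h1 := U.le_opNorm z
        have hz1 : ‖z‖ = 1 := by
          have := hznorm
          nlinarith [norm_nonneg z]
        rw [hz1, mul_one] at h1
        exact h1
      calc OpNormTri.sFun (β p) (γ p) η = ‖U z‖ ^ 2 := hUnorm.symm
      _ ≤ ‖U‖ ^ 2 := by apply pow_le_pow_left₀ (norm_nonneg _) hle
    have hSle : S ≤ ‖U‖ ^ 2 := ciSup_le hlow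
    calc Real.sqrt S ≤ Real.sqrt (‖U‖ ^ 2) := Real.sqrt_le_sqrt hSle
    _ = ‖U‖ := Real.sqrt_sq (ContinuousLinearMap.opNorm_nonneg U)
end

section
/- Under the same diagonalization assumptions, the seminorm |U| := sup_{‖(x,b)‖=1} ‖Wx + Vb‖ of the operator U(x,b) = (Wx + Vb, ηb) equals sqrt(sup_p (β_p² + γ_p²)), and this seminorm is at most the operator norm of U. -/
open scoped BigOperators


lemma repr_diag_aux {X : Type*} [NormedAddCommGroup X] [InnerProductSpace ℝ X] [CompleteSpace X]
    (v : HilbertBasis ℕ ℝ X) (W : X →L[ℝ] X) (β : ℕ → ℝ)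
    (hW : ∀ p, W (v p) = β p • v p) (x : X) (p : ℕ) :
    v.repr (W x) p = β p * v.repr x p := by
  have horth : ∀ i j, (inner ℝ (v i) (v j) : ℝ) = if i = j then 1 else 0 := by
    have := v.orthonormal
    rw [orthonormal_iff_ite] at this
    simpa using this
  have h1 : HasSum (fun i => (β i * v.repr x i) • v i) (W x) := by
    have := (W.hasSum (v.hasSum_repr x))
    simpa only [map_smul, hW, smul_smul, mul_comm] using this
  have h2 : HasSum (fun i => if i = p then β p * v.repr x p else 0)
      ((inner ℝ (v p) (W x)) : ℝ) := by
    have := h1.mapL (innerSL ℝ (v p))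
    simp only [innerSL_apply_apply, real_inner_smul_right, horth] at this
    convert this using 2 with i
    · rfl
    by_cases h : i = p
    · simp [h]
    · simp [h, Ne.symm h]
  have h3 := h2.unique (hasSum_ite_eq p (β p * v.repr x p))
  rw [v.repr_apply_apply, ← h3]

lemma summable_sq_aux {X : Type*} [NormedAddCommGroup X] [InnerProductSpace ℝ X] [CompleteSpace X]
    (v : HilbertBasis ℕ ℝ X) (y : X) : Summable fun p => (v.repr y p)^2 := by
  have h := (memℓp_gen_iff (p := 2) (by norm_num)).1 (lp.memℓp (v.repr y))
  have : ∀ p : ℕ, ‖v.repr y p‖ ^ (2:ENNReal).toReal = (v.repr y p)^2 := by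
    intro p
    rw [show ((2:ENNReal)).toReal = (2:ℕ) by norm_num, Real.rpow_natCast]
    simp [Real.norm_eq_abs, sq_abs]
  simpa [this] using h

lemma norm_sq_eq_tsum_aux {X : Type*} [NormedAddCommGroup X] [InnerProductSpace ℝ X] [CompleteSpace X]
    (v : HilbertBasis ℕ ℝ X) (y : X) : ‖y‖^2 = ∑' p, (v.repr y p)^2 := by
  have h1 : ‖y‖ = ‖v.repr y‖ := (v.repr.norm_map y).symm
  have h2 := lp.norm_rpow_eq_tsum (p := 2) (by norm_num) (v.repr y)
  rw [h1]
  have : ∀ p : ℕ, ‖v.repr y p‖ ^ (2:ENNReal).toReal = (v.repr y p)^2 := by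
    intro p
    rw [show ((2:ENNReal)).toReal = (2:ℕ) by norm_num, Real.rpow_natCast]
    simp [Real.norm_eq_abs, sq_abs]
  rw [show ((2:ENNReal)).toReal = (2:ℕ) by norm_num, Real.rpow_natCast] at h2
  simpa [this] using h2

/-- The seminorm `|U| = sup_{‖(x,b)‖=1} ‖Wx + Vb‖` of `U(x,b) = (Wx + Vb, ηb)`
equals `√(sup_p (β_p² + γ_p²))`, and is at most the operator norm of `U`. -/
theorem seminorm_triangular_operator
    {X : Type*} [NormedAddCommGroup X] [InnerProductSpace ℝ X] [CompleteSpace X]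
    (v : HilbertBasis ℕ ℝ X)
    (W V : X →L[ℝ] X) (β γ : ℕ → ℝ) (η : ℝ)
    (hW : ∀ p, W (v p) = β p • v p) (hV : ∀ p, V (v p) = γ p • v p)
    (U : WithLp 2 (X × X) →L[ℝ] WithLp 2 (X × X))
    (hU : ∀ z : WithLp 2 (X × X),
      WithLp.equiv 2 (X × X) (U z) =
        (W (WithLp.equiv 2 (X × X) z).1 + V (WithLp.equiv 2 (X × X) z).2,
         η • (WithLp.equiv 2 (X × X) z).2)) :
    sSup {c : ℝ | ∃ z : WithLp 2 (X × X), ‖z‖ = 1 ∧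
        c = ‖W (WithLp.equiv 2 (X × X) z).1 + V (WithLp.equiv 2 (X × X) z).2‖}
      = Real.sqrt (⨆ p : ℕ, (β p ^ 2 + γ p ^ 2)) ∧
    Real.sqrt (⨆ p : ℕ, (β p ^ 2 + γ p ^ 2)) ≤ ‖U‖ := by
  set S := {c : ℝ | ∃ z : WithLp 2 (X × X), ‖z‖ = 1 ∧
      c = ‖W (WithLp.equiv 2 (X × X) z).1 + V (WithLp.equiv 2 (X × X) z).2‖} with hSdef
  set M := ⨆ p : ℕ, (β p ^ 2 + γ p ^ 2) with hMdef
  have hnorm_v : ∀ p, ‖v p‖ = 1 := fun p => v.orthonormal.1 p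
  -- boundedness of the eigenvalue expression
  have hbdd : BddAbove (Set.range fun p => β p ^ 2 + γ p ^ 2) := by
    refine ⟨‖W‖ ^ 2 + ‖V‖ ^ 2, ?_⟩
    rintro _ ⟨p, rfl⟩
    have h1 : |β p| ≤ ‖W‖ := by
      have := W.le_opNorm (v p)
      rw [hW p, norm_smul, hnorm_v p, Real.norm_eq_abs] at this
      simpa using this
    have h2 : |γ p| ≤ ‖V‖ := by
      have := V.le_opNorm (v p)
      rw [hV p, norm_smul, hnorm_v p, Real.norm_eq_abs] at this
      simpa using this
    have := abs_nonneg (β p)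
    have := abs_nonneg (γ p)
    dsimp only
    nlinarith [sq_abs (β p), sq_abs (γ p)]
  have hle : ∀ p, β p ^ 2 + γ p ^ 2 ≤ M := fun p => le_ciSup hbdd p
  have hM0 : 0 ≤ M := le_trans (by positivity) (hle 0)
  -- Key A : upper bound
  have keyA : ∀ x b : X, ‖W x + V b‖ ^ 2 ≤ M * (‖x‖ ^ 2 + ‖b‖ ^ 2) := by
    intro x b
    have hrepr : ∀ p, v.repr (W x + V b) p =
        β p * v.repr x p + γ p * v.repr b p := by
      intro p
      rw [map_add]
      simp only [lp.coeFn_add, Pi.add_apply]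
      rw [repr_diag_aux v W β hW x p, repr_diag_aux v V γ hV b p]
    have hsum1 : Summable fun p => (β p * v.repr x p + γ p * v.repr b p) ^ 2 :=
      (summable_sq_aux v (W x + V b)).congr fun p => by rw [hrepr p]
    have hsum2 : Summable fun p => M * ((v.repr x p) ^ 2 + (v.repr b p) ^ 2) :=
      (((summable_sq_aux v x).add (summable_sq_aux v b)).mul_left M)
    have hpt : ∀ p, (β p * v.repr x p + γ p * v.repr b p) ^ 2 ≤
        M * ((v.repr x p) ^ 2 + (v.repr b p) ^ 2) := by
      intro p
      have h1 := hle p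
      nlinarith [sq_nonneg (β p * v.repr b p - γ p * v.repr x p),
        sq_nonneg (v.repr x p), sq_nonneg (v.repr b p)]
    calc ‖W x + V b‖ ^ 2 = ∑' p, (β p * v.repr x p + γ p * v.repr b p) ^ 2 := by
          rw [norm_sq_eq_tsum_aux v (W x + V b)]
          exact tsum_congr fun p => by rw [hrepr p]
      _ ≤ ∑' p, M * ((v.repr x p) ^ 2 + (v.repr b p) ^ 2) :=
          Summable.tsum_le_tsum hpt hsum1 hsum2
      _ = M * (‖x‖ ^ 2 + ‖b‖ ^ 2) := by
          rw [tsum_mul_left, Summable.tsum_add (summable_sq_aux v x) (summable_sq_aux v b),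
            norm_sq_eq_tsum_aux v x, norm_sq_eq_tsum_aux v b]
  -- Key B : each sqrt(β p ^2 + γ p ^2) is attained
  have keyB : ∀ p, Real.sqrt (β p ^ 2 + γ p ^ 2) ∈ S := by
    intro p
    by_cases hz : β p ^ 2 + γ p ^ 2 = 0
    · have hβ : β p = 0 := by nlinarith [sq_nonneg (β p), sq_nonneg (γ p)]
      have hγ : γ p = 0 := by nlinarith [sq_nonneg (β p), sq_nonneg (γ p)]
      refine ⟨(WithLp.equiv 2 (X × X)).symm (v p, 0), ?_, ?_⟩
      · rw [WithLp.prod_norm_eq_of_L2]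
        simp [WithLp.equiv_symm_apply, WithLp.toLp_fst, WithLp.toLp_snd, hnorm_v p]
      · simp [hz, Equiv.apply_symm_apply, hW p, hV p, hβ, hγ]
    · set s := Real.sqrt (β p ^ 2 + γ p ^ 2) with hs
      have hpos : 0 < β p ^ 2 + γ p ^ 2 :=
        lt_of_le_of_ne (by positivity) (Ne.symm hz)
      have hspos : 0 < s := Real.sqrt_pos.2 hpos
      have hssq : s ^ 2 = β p ^ 2 + γ p ^ 2 := Real.sq_sqrt hpos.le
      refine ⟨(WithLp.equiv 2 (X × X)).symm ((β p / s) • v p, (γ p / s) • v p), ?_, ?_⟩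
      · rw [WithLp.prod_norm_eq_of_L2]
        simp only [WithLp.equiv_symm_apply, WithLp.toLp_fst, WithLp.toLp_snd, norm_smul,
          Real.norm_eq_abs, hnorm_v p, mul_one]
        rw [sq_abs, sq_abs, div_pow, div_pow, ← add_div, ← hssq]
        rw [div_self (by positivity), Real.sqrt_one]
      · simp only [Equiv.apply_symm_apply]
        rw [map_smul, map_smul, hW p, hV p, smul_smul, smul_smul, ← add_smul]
        have : β p / s * β p + γ p / s * γ p = s := by
          field_simp
          nlinarith [hssq]
        rw [this, norm_smul, Real.norm_eq_abs, hnorm_v p, mul_one,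
          abs_of_pos hspos]
  have hSne : S.Nonempty := ⟨_, keyB 0⟩
  have hSub : ∀ c ∈ S, c ≤ Real.sqrt M := by
    rintro c ⟨z, hz1, rfl⟩
    have hz2 : ‖(WithLp.equiv 2 (X × X) z).1‖ ^ 2 + ‖(WithLp.equiv 2 (X × X) z).2‖ ^ 2
        = 1 := by
      rw [WithLp.equiv_apply, WithLp.ofLp_fst, WithLp.ofLp_snd, ← WithLp.prod_norm_sq_eq_of_L2, hz1]
      norm_num
    have h := keyA (WithLp.equiv 2 (X × X) z).1 (WithLp.equiv 2 (X × X) z).2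
    rw [hz2, mul_one] at h
    have := norm_nonneg (W (WithLp.equiv 2 (X × X) z).1 + V (WithLp.equiv 2 (X × X) z).2)
    rw [show Real.sqrt M = Real.sqrt M from rfl]
    nlinarith [Real.sq_sqrt hM0, Real.sqrt_nonneg M]
  have hSbdd : BddAbove S := ⟨Real.sqrt M, hSub⟩
  have le1 : sSup S ≤ Real.sqrt M := csSup_le hSne hSub
  have hS0 : 0 ≤ sSup S := by
    refine le_trans (Real.sqrt_nonneg _) (le_csSup hSbdd (keyB 0))
  have le2 : Real.sqrt M ≤ sSup S := by
    have hMle : M ≤ (sSup S) ^ 2 := by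
      refine ciSup_le fun p => ?_
      have h1 : Real.sqrt (β p ^ 2 + γ p ^ 2) ≤ sSup S := le_csSup hSbdd (keyB p)
      nlinarith [Real.sq_sqrt (show (0:ℝ) ≤ β p ^ 2 + γ p ^ 2 by positivity),
        Real.sqrt_nonneg (β p ^ 2 + γ p ^ 2)]
    calc Real.sqrt M ≤ Real.sqrt ((sSup S) ^ 2) := Real.sqrt_le_sqrt hMle
      _ = sSup S := by rw [Real.sqrt_sq hS0]
  have heq : sSup S = Real.sqrt M := le_antisymm le1 le2
  refine ⟨heq, ?_⟩
  rw [← heq]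
  refine csSup_le hSne ?_
  rintro c ⟨z, hz1, rfl⟩
  have hUz : ‖U z‖ ^ 2 =
      ‖W (WithLp.equiv 2 (X × X) z).1 + V (WithLp.equiv 2 (X × X) z).2‖ ^ 2
        + ‖η • (WithLp.equiv 2 (X × X) z).2‖ ^ 2 := by
    rw [WithLp.prod_norm_sq_eq_of_L2]
    have h1 : (U z).fst = W (WithLp.equiv 2 (X × X) z).1 + V (WithLp.equiv 2 (X × X) z).2 := by
      have := congrArg Prod.fst (hU z)
      exact this
    have h2 : (U z).snd = η • (WithLp.equiv 2 (X × X) z).2 := by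
      have := congrArg Prod.snd (hU z)
      exact this
    rw [h1, h2]
  have hUzle : ‖U z‖ ≤ ‖U‖ := by
    have := U.le_opNorm z
    rwa [hz1, mul_one] at this
  have h1 : ‖W (WithLp.equiv 2 (X × X) z).1 + V (WithLp.equiv 2 (X × X) z).2‖ ≤ ‖U z‖ := by
    nlinarith [norm_nonneg (U z),
      norm_nonneg (W (WithLp.equiv 2 (X × X) z).1 + V (WithLp.equiv 2 (X × X) z).2),
      sq_nonneg ‖η • (WithLp.equiv 2 (X × X) z).2‖]
  exact h1.trans hUzle
end

section
/- Let (θ_n) be defined by θ_0 = 1 and θ_n = Σ_{i=1}^n θ_{i−1} c_{i,n}, where c_{i,n} = ‖U_n ∘ ⋯ ∘ U_i‖ for bounded linear operators U_1, …, U_m between Hilbert spaces. Then ‖U_m ∘ ⋯ ∘ U_1‖ ≤ θ_m / 2^{m−1} ≤ ∏_{n=1}^m ‖U_n‖. -/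
open scoped BigOperators

/-- Composition of the operators `U i, U (i+1), …, U (i+j-1)` (a chain of length `j`
starting at layer `i`). -/
noncomputable def compUp (H : ℕ → Type*) [∀ i, NormedAddCommGroup (H i)]
    [∀ i, InnerProductSpace ℝ (H i)]
    (U : ∀ n, H n →L[ℝ] H (n + 1)) (i : ℕ) : (j : ℕ) → (H i →L[ℝ] H (i + j))
  | 0 => ContinuousLinearMap.id ℝ (H i)
  | (j + 1) => (U (i + j)).comp (compUp H U i j)

section Aux
variable (H : ℕ → Type*) [∀ i, NormedAddCommGroup (H i)]
    [∀ i, InnerProductSpace ℝ (H i)] (U : ∀ n, H n →L[ℝ] H (n + 1))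

lemma heq_U_congr {n m : ℕ} (h : n = m) {v : H n} {w : H m} (hvw : HEq v w) :
    HEq (U n v) (U m w) := by subst h; cases hvw; rfl

lemma norm_heq {n m : ℕ} (h : n = m) {v : H n} {w : H m} (hvw : HEq v w) :
    ‖v‖ = ‖w‖ := by subst h; cases hvw; rfl

lemma compUp_heq (i a b : ℕ) (x : H i) :
    HEq (compUp H U i (a + b) x) (compUp H U (i + a) b (compUp H U i a x)) := by
  induction b with
  | zero => exact HEq.rfl
  | succ b ih =>
      show HEq (U (i + (a + b)) (compUp H U i (a + b) x))
        (U ((i + a) + b) (compUp H U (i + a) b (compUp H U i a x)))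
      exact heq_U_congr H U (by omega) ih

lemma heq_compUp_congr {n m : ℕ} (h : n = m) (b : ℕ) {v : H n} {w : H m} (hvw : HEq v w) :
    HEq (compUp H U n b v) (compUp H U m b w) := by subst h; cases hvw; rfl

lemma norm_compUp_split0 (a b : ℕ) :
    ‖compUp H U 0 (a + b)‖ ≤ ‖compUp H U a b‖ * ‖compUp H U 0 a‖ := by
  apply ContinuousLinearMap.opNorm_le_bound _ (by positivity)
  intro x
  set y := compUp H U 0 a x with hy
  set z : H a := (Nat.zero_add a) ▸ y with hz
  have hcast : HEq y z := (eqRec_heq _ _).symm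
  have h1 : ‖compUp H U 0 (a + b) x‖ = ‖compUp H U a b z‖ :=
    norm_heq H (by omega)
      ((compUp_heq H U 0 a b x).trans (heq_compUp_congr H U (Nat.zero_add a) b hcast))
  have h2 : ‖z‖ = ‖y‖ := norm_heq H (Nat.zero_add a).symm hcast.symm
  calc ‖compUp H U 0 (a + b) x‖ = ‖compUp H U a b z‖ := h1
    _ ≤ ‖compUp H U a b‖ * ‖z‖ := ContinuousLinearMap.le_opNorm _ _
    _ = ‖compUp H U a b‖ * ‖y‖ := by rw [h2]
    _ ≤ ‖compUp H U a b‖ * (‖compUp H U 0 a‖ * ‖x‖) :=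
        mul_le_mul_of_nonneg_left (ContinuousLinearMap.le_opNorm _ _) (norm_nonneg _)
    _ = ‖compUp H U a b‖ * ‖compUp H U 0 a‖ * ‖x‖ := by ring

lemma norm_compUp_le_prod (i j : ℕ) :
    ‖compUp H U i j‖ ≤ ∏ k ∈ Finset.range j, ‖U (i + k)‖ := by
  induction j with
  | zero => simpa [compUp] using ContinuousLinearMap.norm_id_le
  | succ j ih =>
      rw [Finset.prod_range_succ, mul_comm]
      calc ‖compUp H U i (j + 1)‖ ≤ ‖U (i + j)‖ * ‖compUp H U i j‖ :=
            ContinuousLinearMap.opNorm_comp_le _ _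
        _ ≤ ‖U (i + j)‖ * ∏ k ∈ Finset.range j, ‖U (i + k)‖ := by
            exact mul_le_mul_of_nonneg_left ih (norm_nonneg _)

lemma sum_two_pow (n : ℕ) : ∑ i ∈ Finset.range (n + 1), (2:ℝ) ^ (i - 1) = 2 ^ n := by
  induction n with
  | zero => simp
  | succ n ih =>
      rw [Finset.sum_range_succ, ih, Nat.add_sub_cancel, pow_succ]
      ring

end Aux

/-- Bounds on the recursively defined Lipschitz estimate `θ_m`:
`‖U_m ∘ ⋯ ∘ U_1‖ ≤ θ_m / 2^{m−1} ≤ ∏ ‖U_n‖` (layers indexed from 0). -/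
theorem theta_bounds (H : ℕ → Type*) [∀ i, NormedAddCommGroup (H i)]
    [∀ i, InnerProductSpace ℝ (H i)] [∀ i, CompleteSpace (H i)] [∀ i, Nontrivial (H i)]
    (U : ∀ n, H n →L[ℝ] H (n + 1)) (m : ℕ) (hm : 1 ≤ m)
    (θ : ℕ → ℝ) (hθ0 : θ 0 = 1)
    (hθ : ∀ n, n + 1 ≤ m →
      θ (n + 1) = ∑ i ∈ Finset.range (n + 1), θ i * ‖compUp H U i (n + 1 - i)‖) :
    ‖compUp H U 0 m‖ ≤ θ m / 2 ^ (m - 1) ∧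
    θ m / 2 ^ (m - 1) ≤ ∏ n ∈ Finset.range m, ‖U n‖ := by
  -- splitting inequality
  have hsplit : ∀ n i : ℕ, i ≤ n →
      ‖compUp H U 0 (n + 1)‖ ≤ ‖compUp H U i (n + 1 - i)‖ * ‖compUp H U 0 i‖ := by
    intro n i hi
    have hib : i + (n + 1 - i) = n + 1 := by omega
    have h := norm_compUp_split0 H U i (n + 1 - i)
    have hnorm : ‖compUp H U 0 (i + (n + 1 - i))‖ = ‖compUp H U 0 (n + 1)‖ :=
      congrArg (fun k => ‖compUp H U 0 k‖) hib
    exact le_of_eq_of_le hnorm.symm h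
  -- lower bound: 2^(n-1) * ‖C_{0,n}‖ ≤ θ n
  have P : ∀ n, n ≤ m → (2:ℝ) ^ (n - 1) * ‖compUp H U 0 n‖ ≤ θ n := by
    intro n
    induction n using Nat.strong_induction_on with
    | _ n ih =>
      match n with
      | 0 => intro _; simp [hθ0, compUp, ContinuousLinearMap.norm_id]
      | Nat.succ n =>
        intro hn
        rw [hθ n hn]
        simp only [Nat.succ_sub_one]
        calc (2:ℝ) ^ n * ‖compUp H U 0 (n + 1)‖
            = ∑ i ∈ Finset.range (n + 1), (2:ℝ) ^ (i - 1) * ‖compUp H U 0 (n + 1)‖ := by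
              rw [← Finset.sum_mul, sum_two_pow]
          _ ≤ ∑ i ∈ Finset.range (n + 1), θ i * ‖compUp H U i (n + 1 - i)‖ := by
              apply Finset.sum_le_sum
              intro i hi
              have hi' : i ≤ n := Nat.lt_succ_iff.mp (Finset.mem_range.mp hi)
              have h1 := hsplit n i hi'
              have h2 := ih i (Nat.lt_succ_of_le hi') (le_trans (Nat.le_succ_of_le hi') hn)
              calc (2:ℝ) ^ (i - 1) * ‖compUp H U 0 (n + 1)‖
                  ≤ (2:ℝ) ^ (i - 1) * (‖compUp H U i (n + 1 - i)‖ * ‖compUp H U 0 i‖) :=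
                    mul_le_mul_of_nonneg_left h1 (by positivity)
                _ = ((2:ℝ) ^ (i - 1) * ‖compUp H U 0 i‖) * ‖compUp H U i (n + 1 - i)‖ := by ring
                _ ≤ θ i * ‖compUp H U i (n + 1 - i)‖ :=
                    mul_le_mul_of_nonneg_right h2 (norm_nonneg _)
  have hθnonneg : ∀ n, n ≤ m → 0 ≤ θ n := fun n hn =>
    le_trans (by positivity) (P n hn)
  -- upper bound: θ n ≤ 2^(n-1) * ∏
  have Q : ∀ n, n ≤ m → θ n ≤ (2:ℝ) ^ (n - 1) * ∏ k ∈ Finset.range n, ‖U k‖ := by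
    intro n
    induction n using Nat.strong_induction_on with
    | _ n ih =>
      match n with
      | 0 => intro _; simp [hθ0]
      | Nat.succ n =>
        intro hn
        rw [hθ n hn]
        simp only [Nat.succ_sub_one]
        calc ∑ i ∈ Finset.range (n + 1), θ i * ‖compUp H U i (n + 1 - i)‖
            ≤ ∑ i ∈ Finset.range (n + 1), (2:ℝ) ^ (i - 1) * ∏ k ∈ Finset.range (n + 1), ‖U k‖ := by
              apply Finset.sum_le_sum
              intro i hi
              have hi' : i ≤ n := Nat.lt_succ_iff.mp (Finset.mem_range.mp hi)
              have him : i ≤ m := le_trans (Nat.le_succ_of_le hi') hn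
              have h2 := ih i (Nat.lt_succ_of_le hi') him
              have h3 := norm_compUp_le_prod H U i (n + 1 - i)
              have hib : i + (n + 1 - i) = n + 1 := by omega
              have hprod : (∏ k ∈ Finset.range i, ‖U k‖) *
                  ∏ k ∈ Finset.range (n + 1 - i), ‖U (i + k)‖
                  = ∏ k ∈ Finset.range (n + 1), ‖U k‖ := by
                rw [← Finset.prod_range_add]
                rw [hib]
              calc θ i * ‖compUp H U i (n + 1 - i)‖
                  ≤ ((2:ℝ) ^ (i - 1) * ∏ k ∈ Finset.range i, ‖U k‖) *
                    ∏ k ∈ Finset.range (n + 1 - i), ‖U (i + k)‖ :=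
                    mul_le_mul h2 h3 (norm_nonneg _) (by positivity)
                _ = (2:ℝ) ^ (i - 1) * ∏ k ∈ Finset.range (n + 1), ‖U k‖ := by
                    rw [mul_assoc, hprod]
          _ = (2:ℝ) ^ n * ∏ k ∈ Finset.range (n + 1), ‖U k‖ := by
              rw [← Finset.sum_mul, sum_two_pow]
  have hpow : (0:ℝ) < 2 ^ (m - 1) := by positivity
  constructor
  · rw [le_div_iff₀ hpow, mul_comm]
    exact P m le_rfl
  · rw [div_le_iff₀ hpow, mul_comm]
    exact Q m le_rfl
end
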